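/- Let p = (1/2, 2/5, 1/10) and q = (3/5, 1/4, 3/20) be probability vectors on Fin 3. Then ¬(p ≺ q), ¬(q ≺ p), and moreover for every m ≥ 1 and every probability vector r on Fin m, ¬(p ⊗ r ≺ q ⊗ r); that is, no catalyst enables the deterministic incoherent transformation from p to q. -/

import Mathlib

/-!
Let `v ≺ w`, where both vanish off a finset `A` and `w ≥ 0`, and compare the best `(#A - 1)`-sums:
that of `v` is at least `∑ v - v x` for each `x ∈ A`, while that of `w` omits some `w y` with
`y ∈ A`, so it is at most `∑ w - w y`. Hence no entry of `v` on `A` lies below every entry of `w`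
on `A`. For a catalyst `r`, both `p ⊗ r` and `q ⊗ r` vanish off `univ ×ˢ supp r`, where
`p i₀ * min r < q i * r j` as soon as `p i₀ < min q`. That `q ≺ p` fails is seen at `k = 1`.
-/

open Finset

/-- max over finsets of card k of the sum of entries -/
noncomputable def maxSum {ι : Type*} [Fintype ι] (p : ι → ℝ) (k : ℕ) : ℝ :=
  sSup {x : ℝ | ∃ S : Finset ι, S.card = k ∧ x = ∑ i ∈ S, p i}

/-- majorization: equal total sums, and for each k the max k-term partial sum
of `p` is at most that of `q`. -/
def Maj {ι : Type*} [Fintype ι] (p q : ι → ℝ) : Prop :=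
  (∑ i, p i = ∑ i, q i) ∧ ∀ k : ℕ, maxSum p k ≤ maxSum q k

/-- a probability vector: nonnegative entries summing to one -/
def IsProbVec {ι : Type*} [Fintype ι] (p : ι → ℝ) : Prop :=
  (∀ i, 0 ≤ p i) ∧ ∑ i, p i = 1

/-- tensor product of two vectors -/
def tensor {ι κ : Type*} (p : ι → ℝ) (r : κ → ℝ) : ι × κ → ℝ :=
  fun x => p x.1 * r x.2

section Majorization

variable {ι : Type*} [Fintype ι]

lemma maxSum_set_finite (v : ι → ℝ) (k : ℕ) :
    {x : ℝ | ∃ S : Finset ι, S.card = k ∧ x = ∑ i ∈ S, v i}.Finite :=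
  (Set.finite_range fun S : Finset ι => ∑ i ∈ S, v i).subset <| by
    rintro x ⟨S, -, rfl⟩
    exact ⟨S, rfl⟩

lemma sum_le_maxSum (v : ι → ℝ) (S : Finset ι) : ∑ i ∈ S, v i ≤ maxSum v S.card :=
  le_csSup (maxSum_set_finite v _).bddAbove ⟨S, rfl, rfl⟩

lemma exists_maxSum_eq_sum (v : ι → ℝ) {k : ℕ} (hk : k ≤ Fintype.card ι) :
    ∃ S : Finset ι, S.card = k ∧ maxSum v k = ∑ i ∈ S, v i := by
  obtain ⟨S, -, hS⟩ := exists_subset_card_eq (s := (univ : Finset ι)) (by simpa using hk)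
  have hne : {x : ℝ | ∃ S : Finset ι, S.card = k ∧ x = ∑ i ∈ S, v i}.Nonempty := ⟨_, S, hS, rfl⟩
  exact hne.csSup_mem (maxSum_set_finite v k)

lemma sum_erase_eq_sum_sub [DecidableEq ι] {v : ι → ℝ} {A : Finset ι} (hv : ∀ i ∉ A, v i = 0) {x : ι}
    (hx : x ∈ A) : ∑ i ∈ A.erase x, v i = ∑ i, v i - v x := by
  rw [sum_erase_eq_sub hx, sum_subset (subset_univ A) fun i _ hi => hv i hi]

lemma exists_sum_le_sum_sub_of_card_lt {w : ι → ℝ} (hw₀ : ∀ i, 0 ≤ w i) {A : Finset ι}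
    (hw : ∀ i ∉ A, w i = 0) {S : Finset ι} (hS : S.card < A.card) :
    ∃ y ∈ A, ∑ i ∈ S, w i ≤ ∑ i, w i - w y := by
  classical
  obtain ⟨y, hyA, hyS⟩ := exists_mem_notMem_of_card_lt_card hS
  refine ⟨y, hyA, ?_⟩
  calc ∑ i ∈ S, w i = ∑ i ∈ S ∩ A, w i :=
        (sum_subset inter_subset_left fun i hiS hi => hw i fun hiA => hi (mem_inter.2 ⟨hiS, hiA⟩)).symm
    _ ≤ ∑ i ∈ A.erase y, w i :=
        sum_le_sum_of_subset_of_nonneg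
          (fun i hi => mem_erase.2 ⟨fun h => hyS (h ▸ (mem_inter.1 hi).1), (mem_inter.1 hi).2⟩)
          fun i _ _ => hw₀ i
    _ = ∑ i, w i - w y := sum_erase_eq_sum_sub hw hyA

theorem not_maj_of_lt_of_vanish_off {v w : ι → ℝ} (hw₀ : ∀ i, 0 ≤ w i) {A : Finset ι}
    (hv : ∀ i ∉ A, v i = 0) (hw : ∀ i ∉ A, w i = 0) {x : ι} (hx : x ∈ A)
    (hlt : ∀ y ∈ A, v x < w y) : ¬ Maj v w := by
  classical
  rintro ⟨hsum, hmaj⟩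
  have hcard : (A.erase x).card = A.card - 1 := card_erase_of_mem hx
  obtain ⟨S, hS, hmaxw⟩ := exists_maxSum_eq_sum w (k := A.card - 1)
    ((Nat.sub_le _ _).trans (card_le_univ A))
  obtain ⟨y, hyA, hSy⟩ := exists_sum_le_sum_sub_of_card_lt hw₀ hw
    (hS.trans_lt (Nat.sub_lt (card_pos.2 ⟨x, hx⟩) one_pos))
  have hlower := sum_le_maxSum v (A.erase x)
  rw [sum_erase_eq_sum_sub hv hx, hcard] at hlower
  linarith [hmaj (A.card - 1), hlt y hyA]

theorem not_maj_of_forall_lt {v w : ι → ℝ} (i : ι) (hlt : ∀ j, v j < w i) : ¬ Maj w v := by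
  rintro ⟨-, hmaj⟩
  obtain ⟨S, hS, hmaxv⟩ := exists_maxSum_eq_sum v (k := 1) (Fintype.card_pos_iff.2 ⟨i⟩)
  obtain ⟨j, rfl⟩ := card_eq_one.1 hS
  have hlower := sum_le_maxSum w {i}
  rw [sum_singleton, card_singleton] at hlower
  rw [sum_singleton] at hmaxv
  linarith [hmaj 1, hlt j]

end Majorization

theorem not_maj_tensor_of_lt {ι κ : Type*} [Fintype ι] [Fintype κ] {p q : ι → ℝ} {r : κ → ℝ}
    (hq : ∀ i, 0 ≤ q i) (hr : ∀ j, 0 ≤ r j) (hr_ne : r ≠ 0) (i₀ : ι) (hlt : ∀ i, p i₀ < q i) :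
    ¬ Maj (tensor p r) (tensor q r) := by
  set R : Finset κ := univ.filter fun j => 0 < r j
  have hR : R.Nonempty := by
    obtain ⟨j, hj⟩ := Function.ne_iff.1 hr_ne
    exact ⟨j, mem_filter.2 ⟨mem_univ j, (hr j).lt_of_ne' hj⟩⟩
  obtain ⟨j₀, hj₀, hmin⟩ := R.exists_min_image r hR
  have hvanish (s : ι → ℝ) : ∀ x ∉ (univ ×ˢ R), tensor s r x = 0 := by
    rintro ⟨i, j⟩ hx
    have hrj : ¬ 0 < r j := fun h => hx (mem_product.2 ⟨mem_univ i, mem_filter.2 ⟨mem_univ j, h⟩⟩)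
    simp only [tensor, le_antisymm (not_lt.1 hrj) (hr j), mul_zero]
  refine not_maj_of_lt_of_vanish_off (fun x => mul_nonneg (hq x.1) (hr x.2))
    (hvanish p) (hvanish q) (x := (i₀, j₀)) (mem_product.2 ⟨mem_univ i₀, hj₀⟩) ?_
  rintro ⟨i, j⟩ hx
  have hr₀ : 0 < r j₀ := (mem_filter.1 hj₀).2
  calc p i₀ * r j₀ < q i * r j₀ := mul_lt_mul_of_pos_right (hlt i) hr₀
    _ ≤ q i * r j := mul_le_mul_of_nonneg_left (hmin j (mem_product.1 hx).2) (hq i)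

/-- A pair of incomparable diagonal distributions for which no catalyst can
enable the deterministic incoherent transformation. -/
theorem no_catalyst_example :
    ¬ Maj (![1/2, 2/5, 1/10] : Fin 3 → ℝ) (![3/5, 1/4, 3/20] : Fin 3 → ℝ) ∧
    ¬ Maj (![3/5, 1/4, 3/20] : Fin 3 → ℝ) (![1/2, 2/5, 1/10] : Fin 3 → ℝ) ∧
    ∀ m : ℕ, 1 ≤ m → ∀ r : Fin m → ℝ, IsProbVec r →
      ¬ Maj (tensor (![1/2, 2/5, 1/10] : Fin 3 → ℝ) r)
            (tensor (![3/5, 1/4, 3/20] : Fin 3 → ℝ) r) := by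
  have hq : ∀ i, 0 ≤ (![3/5, 1/4, 3/20] : Fin 3 → ℝ) i := by
    intro i; fin_cases i <;> norm_num
  have hmin : ∀ i, (![1/2, 2/5, 1/10] : Fin 3 → ℝ) 2 < (![3/5, 1/4, 3/20] : Fin 3 → ℝ) i := by
    intro i; fin_cases i <;> simp <;> norm_num
  refine ⟨not_maj_of_lt_of_vanish_off hq (A := univ) (by simp) (by simp) (mem_univ 2)
      fun i _ => hmin i, not_maj_of_forall_lt 0 ?_, ?_⟩
  · intro j; fin_cases j <;> norm_num
  · rintro m - r ⟨hr, hsum⟩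
    refine not_maj_tensor_of_lt hq hr ?_ 2 hmin
    rintro rfl
    simp at hsum
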